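/- arXiv:2005.01626 — 5 statements merged into one kernel-verified Lean document; each statement's English description precedes it below -/
import Mathlib

section
/- Let M be a monobrick in a length abelian category, ordered by the submodule order (L ≤ N iff there is a monomorphism L ↪ N). Then the set max(M) of maximal elements of M is a semibrick. -/
open CategoryTheory CategoryTheory.Limits

namespace MonobrickPaper

universe v u

variable {A : Type u} [Category.{v} A] [Abelian A]

/-- A set of objects closed under isomorphisms (models a set of iso-classes). -/
def IsoClosedSet (S : Set A) : Prop :=
  ∀ ⦃X Y : A⦄, (X ≅ Y) → X ∈ S → Y ∈ S

/-- A brick: an object whose endomorphism ring is a division ring, phrased as: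
nonzero and every nonzero endomorphism is an isomorphism. -/
def IsBrick (X : A) : Prop :=
  ¬ IsZero X ∧ ∀ f : X ⟶ X, f = 0 ∨ IsIso f

/-- A subcategory (set of objects) closed under extensions (containing the zero objects). -/
def ExtClosed (E : Set A) : Prop :=
  (∀ X : A, IsZero X → X ∈ E) ∧
  ∀ (S : ShortComplex A), S.ShortExact → S.X₁ ∈ E → S.X₃ ∈ E → S.X₂ ∈ E

/-- `M` is a simple object of `E`: nonzero, and admits no short exact sequence
`0 → L → M → N → 0` with `L, N` nonzero objects of `E`. -/
def SimpleIn (E : Set A) (M : A) : Prop :=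
  ¬ IsZero M ∧ ∀ ⦃L N : A⦄ (i : L ⟶ M) (p : M ⟶ N) (w : i ≫ p = 0),
    (ShortComplex.mk i p w).ShortExact → L ∈ E → N ∈ E → IsZero L ∨ IsZero N

/-- The set of simple objects of `E`. -/
def simpSet (E : Set A) : Set A := {X | X ∈ E ∧ SimpleIn E X}

/-- `M` is left Schurian for `E`: nonzero, and every morphism from `M` to an object
of `E` is zero or a monomorphism. -/
def LeftSchurianFor (E : Set A) (M : A) : Prop :=
  ¬ IsZero M ∧ ∀ ⦃X : A⦄, X ∈ E → ∀ f : M ⟶ X, f = 0 ∨ Mono f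

/-- A monobrick: an iso-closed set of bricks such that every morphism between its
members is zero or a monomorphism. -/
def IsMonobrick (M : Set A) : Prop :=
  IsoClosedSet M ∧ (∀ X ∈ M, IsBrick X) ∧
  ∀ ⦃X : A⦄, X ∈ M → ∀ ⦃Y : A⦄, Y ∈ M → ∀ f : X ⟶ Y, f = 0 ∨ Mono f

/-- A semibrick: an iso-closed set of bricks such that every morphism between its
members is zero or an isomorphism. -/
def IsSemibrick (S : Set A) : Prop :=
  IsoClosedSet S ∧ (∀ X ∈ S, IsBrick X) ∧
  ∀ ⦃X : A⦄, X ∈ S → ∀ ⦃Y : A⦄, Y ∈ S → ∀ f : X ⟶ Y, f = 0 ∨ IsIso f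

/-- Membership in the extension closure `Filt C`: objects admitting a finite filtration with
subquotients in `C`, generated by objects isomorphic to members of `C`, zero objects, and
extensions. -/
inductive FiltMem (C : Set A) : A → Prop
  | of_iso {X Y : A} (h : Y ∈ C) (e : X ≅ Y) : FiltMem C X
  | of_isZero {X : A} (h : IsZero X) : FiltMem C X
  | of_extension {S : ShortComplex A} (hS : S.ShortExact)
      (h1 : FiltMem C S.X₁) (h3 : FiltMem C S.X₃) : FiltMem C S.X₂

/-- The extension closure of `C`. -/
def Filt (C : Set A) : Set A := {X | FiltMem C X}

/-- A left Schur subcategory: extension-closed (and iso-closed), and every simple object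
is left Schurian. -/
def IsLeftSchur (E : Set A) : Prop :=
  IsoClosedSet E ∧ ExtClosed E ∧ ∀ M ∈ E, SimpleIn E M → LeftSchurianFor E M

/-- A torsion-free class: closed under extensions and subobjects. -/
def IsTorsionFreeClass (F : Set A) : Prop :=
  IsoClosedSet F ∧ ExtClosed F ∧
  ∀ ⦃X Y : A⦄ (f : X ⟶ Y), Mono f → Y ∈ F → X ∈ F

/-- A wide subcategory: closed under extensions, kernels and cokernels. -/
def IsWide (W : Set A) : Prop :=
  IsoClosedSet W ∧ ExtClosed W ∧
  (∀ ⦃X Y : A⦄ (f : X ⟶ Y), X ∈ W → Y ∈ W → kernel f ∈ W) ∧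
  (∀ ⦃X Y : A⦄ (f : X ⟶ Y), X ∈ W → Y ∈ W → cokernel f ∈ W)

/-- The submodule order: `X ≤ Y` iff there is a monomorphism `X ↪ Y`. -/
def subOrder (X Y : A) : Prop := ∃ f : X ⟶ Y, Mono f

/-- The set of maximal elements of `M` with respect to the submodule order
(maximality up to isomorphism of iso-classes). -/
def maxSet (M : Set A) : Set A :=
  {X | X ∈ M ∧ ∀ Y ∈ M, subOrder X Y → subOrder Y X}

/-- `N` is a cofinal extension of the monobrick `M`. -/
def IsCofinalExt (M N : Set A) : Prop :=
  IsMonobrick N ∧ M ⊆ N ∧ ∀ X ∈ N, ∃ Y ∈ M, subOrder X Y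

/-- A cofinally closed monobrick: no cofinal extension other than itself. -/
def IsCofinallyClosed (M : Set A) : Prop :=
  IsMonobrick M ∧ ∀ N : Set A, IsCofinalExt M N → N = M

/-- The cofinal closure of `M`: the union of all cofinal extensions of `M`. -/
def cofClosure (M : Set A) : Set A :=
  {X | ∃ N : Set A, IsCofinalExt M N ∧ X ∈ N}

/-- All subobjects of objects of `C`. -/
def subClosure (C : Set A) : Set A := {X | ∃ Y ∈ C, subOrder X Y}


theorem statement13 [∀ X : A, IsNoetherianObject X] [∀ X : A, IsArtinianObject X] (M : Set A) (hM : IsMonobrick M) :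
    IsSemibrick (maxSet M) := by
  obtain ⟨hiso, hbrick, hmono⟩ := hM
  refine ⟨?_, fun X hX => hbrick X hX.1, ?_⟩
  · rintro X Y e ⟨hXM, hXmax⟩
    refine ⟨hiso e hXM, fun Z hZ hYZ => ?_⟩
    obtain ⟨g, hg⟩ := hYZ
    obtain ⟨h, hh⟩ := hXmax Z hZ ⟨e.hom ≫ g, mono_comp _ _⟩
    exact ⟨h ≫ e.hom, mono_comp _ _⟩
  · rintro X ⟨hXM, hXmax⟩ Y ⟨hYM, hYmax⟩ f
    rcases hmono hXM hYM f with hf0 | hfm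
    · exact Or.inl hf0
    right
    -- f : X ⟶ Y is mono, so subOrder X Y, hence by maximality there is mono g : Y ⟶ X
    obtain ⟨g, hg⟩ := hXmax Y hYM ⟨f, hfm⟩
    have hYne : ¬ IsZero Y := (hbrick Y hYM).1
    have hXne : ¬ IsZero X := (hbrick X hXM).1
    -- g ≫ f : Y ⟶ Y is mono, hence nonzero, hence iso (brick)
    have hgf : Mono (g ≫ f) := mono_comp _ _
    have hgfne : g ≫ f ≠ 0 := by
      intro h
      exact hYne (IsZero.of_mono_eq_zero (g ≫ f) h)
    have hgfiso : IsIso (g ≫ f) := ((hbrick Y hYM).2 (g ≫ f)).resolve_left hgfne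
    -- f is split epi
    have hepi : Epi f := by
      have : (inv (g ≫ f) ≫ g) ≫ f = 𝟙 Y := by
        rw [Category.assoc, IsIso.inv_comp_eq]; simp
      exact (⟨⟨⟨inv (g ≫ f) ≫ g, this⟩⟩⟩ : IsSplitEpi f).epi
    exact isIso_of_mono_of_epi f

end MonobrickPaper
end

section
/- Let E be a left Schur subcategory of a length abelian category A, and let W(E) be the subcategory of objects W ∈ E such that for every morphism f: W → X with X ∈ E, coker(f) ∈ E. Then a simple object M of E belongs to W(E) if and only if M is maximal in the submodule order on simp(E). -/
open CategoryTheory CategoryTheory.Limits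

namespace MonobrickPaper

universe v u

variable {A : Type u} [Category.{v} A] [Abelian A]

/-- `W(E)`: objects `W ∈ E` such that `coker f ∈ E` for every morphism `f : W → X` with `X ∈ E`. -/
def Wmap (E : Set A) : Set A :=
  {W | W ∈ E ∧ ∀ ⦃X : A⦄, X ∈ E → ∀ f : W ⟶ X, cokernel f ∈ E}

section Auxiliary

open CategoryTheory.Abelian
open scoped Pseudoelement

/-- The short complex `X ⟶ Y ⟶ cokernel f` associated to a mono is short exact. -/
lemma shortExact_mk_cokernel {X Y : A} (f : X ⟶ Y) [Mono f] :
    (ShortComplex.mk f (cokernel.π f) (cokernel.condition f)).ShortExact :=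
  ShortComplex.ShortExact.mk'
    (ShortComplex.exact_of_g_is_cokernel _ (cokernelIsCokernel f)) ‹_› inferInstance

lemma exact_mk_kernel {X Y : A} (f : X ⟶ Y) :
    (ShortComplex.mk (kernel.ι f) f (kernel.condition f)).Exact :=
  ShortComplex.exact_of_f_is_kernel _ (kernelIsKernel f)

lemma isZero_of_epi_zero {X Y : A} (f : X ⟶ Y) [Epi f] (h : f = 0) : IsZero Y := by
  rw [IsZero.iff_id_eq_zero, ← cancel_epi f, h, zero_comp, comp_zero]

lemma isZero_cokernel_of_epi {X Y : A} (f : X ⟶ Y) [Epi f] : IsZero (cokernel f) :=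
  isZero_of_epi_zero (cokernel.π f) (cokernel.π_of_epi f)

/-- A monic endomorphism of an artinian object is an isomorphism. -/
lemma isIso_endo_of_mono {X : A} [IsArtinianObject X] (f : X ⟶ X) [Mono f] : IsIso f := by
  let pw : ℕ → (X ⟶ X) := fun n => Nat.rec (𝟙 X) (fun _ g => f ≫ g) n
  have hpw : ∀ n, Mono (pw n) := by
    intro n
    induction n with
    | zero => exact inferInstanceAs (Mono (𝟙 X))
    | succ n ih => exact @mono_comp _ _ _ _ _ f ‹_› (pw n) ih
  let c : ℕ → Subobject X := fun n => @Subobject.mk _ _ _ _ (pw n) (hpw n)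
  obtain ⟨_, ⟨n, rfl⟩, hmin⟩ := (wellFounded_lt (α := Subobject X)).has_min
    (Set.range c) ⟨c 0, 0, rfl⟩
  haveI := hpw n
  haveI := hpw (n + 1)
  have hle : c (n + 1) ≤ c n :=
    @Subobject.mk_le_mk_of_comm _ _ _ _ _ (pw (n + 1)) (pw n) (hpw (n + 1)) (hpw n) f rfl
  have hge : c n ≤ c (n + 1) := by
    rcases hle.lt_or_eq with hlt | he
    · exact absurd hlt (hmin _ ⟨n + 1, rfl⟩)
    · exact he.ge
  let k0 : X ⟶ X := @Subobject.ofMkLEMk _ _ _ _ _ (pw n) (pw (n + 1)) (hpw n) (hpw (n + 1)) hge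
  have hk : k0 ≫ pw (n + 1) = pw n :=
    @Subobject.ofMkLEMk_comp _ _ _ _ _ (pw n) (pw (n + 1)) (hpw n) (hpw (n + 1)) hge
  have hkf : k0 ≫ f = 𝟙 X := by
    have h2 : (k0 ≫ f) ≫ pw n = 𝟙 X ≫ pw n := by
      rw [Category.id_comp, Category.assoc]
      exact hk
    exact (@cancel_mono _ _ _ _ _ (pw n) (hpw n) _ _).1 h2
  have h3 : f ≫ k0 = 𝟙 X := by
    have : (f ≫ k0) ≫ f = 𝟙 X ≫ f := by
      rw [Category.assoc, hkf, Category.comp_id, Category.id_comp]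
    exact (‹Mono f› : Mono f).right_cancellation _ _ this
  exact ⟨⟨k0, h3, hkf⟩⟩

/-- `FiltMem` is closed under isomorphisms. -/
lemma FiltMem.iso {C : Set A} {X Y : A} (h : FiltMem C X) (e : Y ≅ X) : FiltMem C Y := by
  cases h with
  | of_iso h e' => exact FiltMem.of_iso h (e ≪≫ e')
  | of_isZero h => exact FiltMem.of_isZero (h.of_iso e)
  | @of_extension S hS h1 h3 =>
      have hS' : (ShortComplex.mk (S.f ≫ e.inv) (e.hom ≫ S.g)
          (by rw [Category.assoc, Iso.inv_hom_id_assoc, S.zero])).ShortExact := by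
        refine ShortComplex.shortExact_of_iso (S₁ := S) ?_ hS
        exact ShortComplex.isoMk (Iso.refl _) e.symm (Iso.refl _)
          (by simp) (by simp)
      exact FiltMem.of_extension hS' h1 h3

lemma filtMem_mem {E : Set A} (hE : IsLeftSchur E) {X : A}
    (h : FiltMem (simpSet E) X) : X ∈ E := by
  induction h with
  | of_iso h e => exact hE.1 e.symm h.1
  | of_isZero h => exact hE.2.1.1 _ h
  | of_extension hS h1 h3 ih1 ih3 => exact hE.2.1.2 _ hS ih1 ih3

/-- Every nonzero object of a left Schur subcategory has a subobject in `E` whose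
cokernel is a simple object of `E`. -/
lemma exists_simple_quotient {E : Set A} (hE : IsLeftSchur E) {X : A} [IsNoetherianObject X]
    (hX : X ∈ E) (hX0 : ¬ IsZero X) :
    ∃ (L : A) (ℓ : L ⟶ X), Mono ℓ ∧ L ∈ E ∧ cokernel ℓ ∈ simpSet E := by
  set T : Set (Subobject X) :=
    {s | (s : A) ∈ E ∧ cokernel s.arrow ∈ E ∧ ¬ IsZero (cokernel s.arrow)} with hT
  have hbot : (⊥ : Subobject X) ∈ T := by
    have h0 : IsZero ((⊥ : Subobject X) : A) := (isZero_zero A).of_iso Subobject.botCoeIsoZero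
    have e : cokernel (⊥ : Subobject X).arrow ≅ X :=
      (cokernelIsoOfEq Subobject.bot_arrow) ≪≫ cokernelZeroIsoTarget
    exact ⟨hE.2.1.1 _ h0, hE.1 e.symm hX, fun hz => hX0 (hz.of_iso e.symm)⟩
  obtain ⟨s, hsT, hmax⟩ := (wellFounded_gt (α := Subobject X)).has_min T ⟨⊥, hbot⟩
  refine ⟨(s : A), s.arrow, inferInstance, hsT.1, hsT.2.1, hsT.2.2, ?_⟩
  intro L' N' i p w hse hL' hN'
  by_contra hcon
  push_neg at hcon
  obtain ⟨hL'0, hN'0⟩ := hcon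
  haveI := hse.mono_f
  haveI := hse.epi_g
  set π := cokernel.π s.arrow with hπdef
  set φ := π ≫ p with hφdef
  haveI : Epi φ := epi_comp _ _
  set k := kernel.ι φ with hkdef
  have hℓφ : s.arrow ≫ φ = 0 := by
    rw [hφdef, ← Category.assoc, cokernel.condition, zero_comp]
  set j := kernel.lift φ s.arrow hℓφ with hjdef
  have hj : j ≫ k = s.arrow := kernel.lift_ι _ _ _
  haveI : Mono j := by
    haveI : Mono (j ≫ k) := by rw [hj]; infer_instance
    exact mono_of_mono j k
  obtain ⟨q, hq₀⟩ := KernelFork.IsLimit.lift' hse.fIsKernel (k ≫ π)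
    (by rw [Category.assoc]; exact kernel.condition φ)
  have q' : kernel φ ⟶ L' := q
  have hq : q ≫ i = k ≫ π := hq₀
  -- `q` is an epimorphism
  haveI hqepi : Epi q := by
    apply Pseudoelement.epi_of_pseudo_surjective
    intro l
    obtain ⟨x, hx⟩ := Pseudoelement.pseudo_surjective_of_epi π (i l)
    have hφx : φ x = 0 := by
      rw [hφdef, Pseudoelement.comp_apply, hx, ← Pseudoelement.comp_apply, w,
        Pseudoelement.zero_apply]
    obtain ⟨y, hy⟩ := Pseudoelement.pseudo_exact_of_exact (exact_mk_kernel φ) x hφx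
    replace hy : k y = x := hy
    refine ⟨y, Pseudoelement.pseudo_injective_of_mono i ?_⟩
    rw [← Pseudoelement.comp_apply, hq, Pseudoelement.comp_apply, hy, hx]
  -- `s < Subobject.mk k`
  have hlt : s < Subobject.mk k := by
    refine lt_of_le_not_ge (Subobject.le_mk_of_comm j hj) ?_
    intro hh
    have hkπ : k ≫ π = 0 := by
      rw [← Subobject.ofMkLE_arrow hh, Category.assoc, cokernel.condition, comp_zero]
    have hq0 : q = 0 := by
      rw [← cancel_mono i, hq, hkπ, zero_comp]
    exact hL'0 (isZero_of_epi_zero q hq0)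
  -- `Subobject.mk k ∈ T`, contradicting maximality of `s`
  have hKmem : (kernel φ : A) ∈ E := by
    have hwjq : j ≫ q = 0 := by
      rw [← cancel_mono i, Category.assoc, hq, zero_comp, ← Category.assoc, hj,
        cokernel.condition]
    have hex : (ShortComplex.mk j q hwjq).Exact := by
      apply Pseudoelement.exact_of_pseudo_exact
      intro y hy
      replace hy : q y = 0 := hy
      have hπky : π (k y) = 0 := by
        rw [← Pseudoelement.comp_apply, ← hq, Pseudoelement.comp_apply, hy,
          Pseudoelement.apply_zero]
      obtain ⟨z, hz⟩ := Pseudoelement.pseudo_exact_of_exact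
        (shortExact_mk_cokernel s.arrow).exact (k y) hπky
      replace hz : s.arrow z = k y := hz
      refine ⟨z, Pseudoelement.pseudo_injective_of_mono k ?_⟩
      show k (j z) = k y
      rw [← Pseudoelement.comp_apply, hj, hz]
    exact hE.2.1.2 _ (ShortComplex.ShortExact.mk' hex ‹_› ‹_›) hsT.1 hL'
  have ecoker : cokernel (Subobject.mk k).arrow ≅ N' := by
    have e1 : cokernel (Subobject.mk k).arrow ≅ cokernel ((Subobject.underlyingIso k).hom ≫ k) :=
      cokernelIsoOfEq (Subobject.underlyingIso_hom_comp_eq_mk k).symm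
    have e2 : cokernel ((Subobject.underlyingIso k).hom ≫ k) ≅ cokernel k :=
      cokernelEpiComp (Subobject.underlyingIso k).hom k
    have hse3 : (ShortComplex.mk k φ (kernel.condition φ)).ShortExact :=
      ShortComplex.ShortExact.mk' (exact_mk_kernel φ) inferInstance ‹_›
    have e3 : cokernel k ≅ N' :=
      IsColimit.coconePointUniqueUpToIso (cokernelIsCokernel k) hse3.gIsCokernel
    exact e1 ≪≫ e2 ≪≫ e3
  have hmkT : Subobject.mk k ∈ T := by
    refine ⟨hE.1 (Subobject.underlyingIso k).symm hKmem, hE.1 ecoker.symm hN', ?_⟩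
    intro hz
    exact hN'0 (hz.of_iso ecoker.symm)
  exact hmax _ hmkT hlt

/-- Every object of a left Schur subcategory is filtered by its simple objects. -/
lemma mem_filt {E : Set A} (hE : IsLeftSchur E) [∀ Z : A, IsNoetherianObject Z]
    [∀ Z : A, IsArtinianObject Z] {X : A} (hX : X ∈ E) : FiltMem (simpSet E) X := by
  have main : ∀ s : Subobject X, (s : A) ∈ E → FiltMem (simpSet E) (s : A) := by
    intro s
    refine (wellFounded_lt (α := Subobject X)).induction
      (C := fun s => (s : A) ∈ E → FiltMem (simpSet E) ((s : Subobject X) : A)) s ?_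
    intro t IH ht
    by_cases hz : IsZero (t : A)
    · exact FiltMem.of_isZero hz
    · obtain ⟨L, ℓ, hmono, hLE, hsimp⟩ := exists_simple_quotient hE ht hz
      haveI := hmono
      haveI : Mono (ℓ ≫ t.arrow) := mono_comp _ _
      set u := Subobject.mk (ℓ ≫ t.arrow) with hudef
      have h1 : u ≤ t := Subobject.mk_le_of_comm ℓ rfl
      have h2 : ¬ t ≤ u := by
        intro hh
        have hr : (Subobject.ofLEMk t (ℓ ≫ t.arrow) hh ≫ ℓ) ≫ t.arrow =
            𝟙 _ ≫ t.arrow := by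
          rw [Category.id_comp, Category.assoc]
          exact Subobject.ofLEMk_comp hh
        have hr' := (cancel_mono t.arrow).1 hr
        haveI : IsSplitEpi ℓ := ⟨⟨⟨Subobject.ofLEMk t (ℓ ≫ t.arrow) hh, hr'⟩⟩⟩
        exact hsimp.2.1 (isZero_cokernel_of_epi ℓ)
      have hu : (u : A) ∈ E := hE.1 (Subobject.underlyingIso (ℓ ≫ t.arrow)).symm hLE
      have hFL : FiltMem (simpSet E) L :=
        FiltMem.iso (IH u (lt_of_le_not_ge h1 h2) hu)
          (Subobject.underlyingIso (ℓ ≫ t.arrow)).symm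
      have hFN : FiltMem (simpSet E) (cokernel ℓ) := FiltMem.of_iso hsimp (Iso.refl _)
      exact FiltMem.of_extension (shortExact_mk_cokernel ℓ) hFL hFN
  have htop : ((⊤ : Subobject X) : A) ∈ E :=
    hE.1 (asIso (Subobject.arrow (⊤ : Subobject X))).symm hX
  exact FiltMem.iso (main ⊤ htop) (asIso (Subobject.arrow (⊤ : Subobject X))).symm

/-- Key lemma: if `M` is a maximal simple object of `E`, then cokernels of monos out of `M`
into filtered objects stay in `E`. -/
lemma coker_mem {E : Set A} (hE : IsLeftSchur E) [∀ Z : A, IsArtinianObject Z] {M : A}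
    (hM : M ∈ simpSet E) (hmax : M ∈ maxSet (simpSet E)) {X : A}
    (hX : FiltMem (simpSet E) X) : ∀ f : M ⟶ X, Mono f → cokernel f ∈ E := by
  induction hX with
  | @of_iso X Y hY e =>
      intro f hf
      haveI := hf
      haveI : Mono (f ≫ e.hom) := mono_comp _ _
      obtain ⟨h, hh⟩ := hmax.2 Y hY ⟨f ≫ e.hom, inferInstance⟩
      haveI := hh
      haveI : Mono ((f ≫ e.hom) ≫ h) := mono_comp _ _
      haveI : IsIso ((f ≫ e.hom) ≫ h) := isIso_endo_of_mono _
      have hsec : (inv ((f ≫ e.hom) ≫ h) ≫ (f ≫ e.hom)) ≫ h = 𝟙 M := by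
        rw [Category.assoc]
        exact IsIso.inv_hom_id _
      haveI : IsSplitEpi h := ⟨⟨⟨inv ((f ≫ e.hom) ≫ h) ≫ (f ≫ e.hom), hsec⟩⟩⟩
      haveI : IsIso h := isIso_of_mono_of_epi h
      haveI : IsIso (f ≫ e.hom) := by
        have : f ≫ e.hom = ((f ≫ e.hom) ≫ h) ≫ inv h := by
          rw [Category.assoc, IsIso.hom_inv_id, Category.comp_id]
        rw [this]; infer_instance
      haveI : IsIso f := by
        have : f = (f ≫ e.hom) ≫ e.inv := by
          rw [Category.assoc, Iso.hom_inv_id, Category.comp_id]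
        rw [this]; infer_instance
      exact hE.2.1.1 _ (isZero_cokernel_of_epi f)
  | of_isZero h =>
      intro f _
      have : cokernel.π f = 0 := (h.eq_zero_of_src (cokernel.π f))
      exact hE.2.1.1 _ (isZero_of_epi_zero (cokernel.π f) this)
  | @of_extension S hS h1 h3 ih1 ih3 =>
      intro f hf
      haveI := hf
      haveI := hS.mono_f
      haveI := hS.epi_g
      have hN : S.X₃ ∈ E := filtMem_mem hE h3
      have hL : S.X₁ ∈ E := filtMem_mem hE h1
      rcases (hE.2.2 M hM.1 hM.2).2 hN (f ≫ S.g) with hg0 | hgm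
      · -- `f` factors through `S.X₁`
        obtain ⟨f', hf'₀⟩ := KernelFork.IsLimit.lift' hS.fIsKernel f hg0
        have hf' : f' ≫ S.f = f := hf'₀
        haveI : Mono f' := by
          haveI : Mono (f' ≫ S.f) := by rw [hf']; infer_instance
          exact mono_of_mono f' S.f
        have hcf' : cokernel f' ∈ E := ih1 f' ‹_›
        set α := cokernel.map f' f (𝟙 M) S.f (by rw [Category.id_comp, hf']) with hα
        set β := cokernel.desc f S.g hg0 with hβ
        have hπα : cokernel.π f' ≫ α = S.f ≫ cokernel.π f := by
          rw [hα]; simp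
        have hπβ : cokernel.π f ≫ β = S.g := by rw [hβ]; simp
        have hwαβ : α ≫ β = 0 := by
          rw [← cancel_epi (cokernel.π f'), ← Category.assoc, hπα, Category.assoc, hπβ,
            S.zero, comp_zero]
        haveI : Mono α := by
          apply Pseudoelement.mono_of_zero_of_map_zero
          intro a ha
          obtain ⟨l, rfl⟩ := Pseudoelement.pseudo_surjective_of_epi (cokernel.π f') a
          have hfl : cokernel.π f (S.f l) = 0 := by
            rw [← Pseudoelement.comp_apply, ← hπα, Pseudoelement.comp_apply, ha]
          obtain ⟨m, hm⟩ := Pseudoelement.pseudo_exact_of_exact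
            (shortExact_mk_cokernel f).exact (S.f l) hfl
          replace hm : f m = S.f l := hm
          have hf'm : f' m = l := by
            apply Pseudoelement.pseudo_injective_of_mono S.f
            rw [← Pseudoelement.comp_apply, hf', hm]
          rw [← hf'm, ← Pseudoelement.comp_apply, cokernel.condition,
            Pseudoelement.zero_apply]
        haveI : Epi β := epi_of_epi_fac hπβ
        have hex : (ShortComplex.mk α β hwαβ).Exact := by
          apply Pseudoelement.exact_of_pseudo_exact
          intro b hb
          replace hb : β b = 0 := hb
          obtain ⟨x, rfl⟩ := Pseudoelement.pseudo_surjective_of_epi (cokernel.π f) b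
          have hgx : S.g x = 0 := by
            rw [← Pseudoelement.comp_apply, hπβ] at hb
            exact hb
          obtain ⟨l, hl⟩ := Pseudoelement.pseudo_exact_of_exact hS.exact x hgx
          replace hl : S.f l = x := hl
          refine ⟨cokernel.π f' l, ?_⟩
          show α (cokernel.π f' l) = cokernel.π f x
          rw [← Pseudoelement.comp_apply, hπα, Pseudoelement.comp_apply, hl]
        exact hE.2.1.2 _ (ShortComplex.ShortExact.mk' hex ‹_› ‹_›) hcf' hN
      · -- `f ≫ S.g` is a mono
        haveI := hgm
        have hcg : cokernel (f ≫ S.g) ∈ E := ih3 (f ≫ S.g) hgm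
        set α := S.f ≫ cokernel.π f with hα
        set β := cokernel.map f (f ≫ S.g) (𝟙 M) S.g (by rw [Category.id_comp]) with hβ
        have hπβ : cokernel.π f ≫ β = S.g ≫ cokernel.π (f ≫ S.g) := by
          rw [hβ]; simp
        have hwαβ : α ≫ β = 0 := by
          rw [hα, Category.assoc, hπβ, ← Category.assoc, S.zero, zero_comp]
        haveI : Mono α := by
          apply Pseudoelement.mono_of_zero_of_map_zero
          intro l hl
          rw [hα, Pseudoelement.comp_apply] at hl
          obtain ⟨m, hm⟩ := Pseudoelement.pseudo_exact_of_exact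
            (shortExact_mk_cokernel f).exact (S.f l) hl
          replace hm : f m = S.f l := hm
          have hm0 : m = 0 := by
            apply Pseudoelement.zero_of_map_zero _
              (Pseudoelement.pseudo_injective_of_mono (f ≫ S.g))
            rw [Pseudoelement.comp_apply, hm, ← Pseudoelement.comp_apply, S.zero,
              Pseudoelement.zero_apply]
          apply Pseudoelement.zero_of_map_zero _
            (Pseudoelement.pseudo_injective_of_mono S.f)
          rw [← hm, hm0, Pseudoelement.apply_zero]
        haveI : Epi (S.g ≫ cokernel.π (f ≫ S.g)) := epi_comp _ _
        haveI : Epi β := epi_of_epi_fac hπβ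
        have hex : (ShortComplex.mk α β hwαβ).Exact := by
          apply Pseudoelement.exact_of_pseudo_exact
          intro b hb
          replace hb : β b = 0 := hb
          obtain ⟨x, rfl⟩ := Pseudoelement.pseudo_surjective_of_epi (cokernel.π f) b
          have hgx : cokernel.π (f ≫ S.g) (S.g x) = 0 := by
            rw [← Pseudoelement.comp_apply, ← hπβ, Pseudoelement.comp_apply, hb]
          obtain ⟨m, hm⟩ := Pseudoelement.pseudo_exact_of_exact
            (shortExact_mk_cokernel (f ≫ S.g)).exact (S.g x) hgx
          replace hm : (f ≫ S.g) m = S.g x := hm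
          rw [Pseudoelement.comp_apply] at hm
          obtain ⟨z, hz0, hz⟩ := Pseudoelement.sub_of_eq_image S.g x (f m) hm.symm
          have hπz : cokernel.π f z = cokernel.π f x := by
            refine hz _ (cokernel.π f) ?_
            rw [← Pseudoelement.comp_apply, cokernel.condition, Pseudoelement.zero_apply]
          obtain ⟨l, hl⟩ := Pseudoelement.pseudo_exact_of_exact hS.exact z hz0
          replace hl : S.f l = z := hl
          refine ⟨l, ?_⟩
          show α l = cokernel.π f x
          rw [hα, Pseudoelement.comp_apply, hl, hπz]
        exact hE.2.1.2 _ (ShortComplex.ShortExact.mk' hex ‹_› ‹_›) hL hcg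

end Auxiliary


theorem statement15 [∀ X : A, IsNoetherianObject X] [∀ X : A, IsArtinianObject X] (E : Set A) (hE : IsLeftSchur E)
    (M : A) (hM : M ∈ simpSet E) :
    M ∈ Wmap E ↔ M ∈ maxSet (simpSet E) := by
  obtain ⟨hMe, hMs⟩ := hM
  constructor
  · intro hW
    refine ⟨⟨hMe, hMs⟩, fun Y hY hsub => ?_⟩
    obtain ⟨f, hf⟩ := hsub
    haveI := hf
    have hC : cokernel f ∈ E := hW.2 hY.1 f
    have hse := shortExact_mk_cokernel f
    rcases hY.2.2 f (cokernel.π f) (cokernel.condition f) hse hMe hC with h | h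
    · exact absurd h hMs.1
    · have hg0 : cokernel.π f = 0 := h.eq_zero_of_tgt (cokernel.π f)
      haveI : Epi f := hse.exact.epi_f hg0
      haveI : IsIso f := isIso_of_mono_of_epi f
      exact ⟨inv f, inferInstance⟩
  · intro hmax
    refine ⟨hMe, fun X hX f => ?_⟩
    rcases (hE.2.2 M hMe hMs).2 hX f with h0 | hm
    · have e : X ≅ cokernel f := (cokernelIsoOfEq h0 ≪≫ cokernelZeroIsoTarget).symm
      exact hE.1 e hX
    · exact coker_mem hE ⟨hMe, hMs⟩ hmax (mem_filt hE hX) f hm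

end MonobrickPaper
end

section
/- Let E be a left Schur subcategory of a length abelian category A and 0 → L → M → N → 0 a short exact sequence in A with L, M, N in E. Then M belongs to W(E) if and only if both L and N belong to W(E), where W(E) consists of objects W ∈ E such that coker(f) ∈ E for every morphism f: W → X with X ∈ E. -/
open CategoryTheory CategoryTheory.Limits

namespace MonobrickPaper

universe v u

variable {A : Type u} [Category.{v} A] [Abelian A]

/-- The cokernel of `pushout.inl i f` is isomorphic to the cokernel of `f`. -/
noncomputable def cokernelPushoutInlIso {L M X : A} (i : L ⟶ M) (f : L ⟶ X) :
    cokernel (pushout.inl i f) ≅ cokernel f where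
  hom := cokernel.desc _ (pushout.desc 0 (cokernel.π f) (by simp)) (by simp only [pushout.inl_desc])
  inv := cokernel.desc _ (pushout.inr i f ≫ cokernel.π (pushout.inl i f))
      (by rw [← Category.assoc, ← pushout.condition, Category.assoc,
        cokernel.condition, comp_zero])
  hom_inv_id := by
    ext <;> simp only [Category.assoc, Category.comp_id, cokernel.π_desc_assoc, pushout.inl_desc_assoc,
      pushout.inr_desc_assoc, zero_comp, cokernel.π_desc, cokernel.condition, cokernel.condition_assoc]
  inv_hom_id := by
    ext
    simp
    simp only [pushout.inr_desc]

/-- The cokernel of `f` composed with the projection to the cokernel of `u ≫ f` is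
isomorphic to the cokernel of `f`. -/
noncomputable def cokernelCompCokernelπIso {L M X : A} (u : L ⟶ M) (f : M ⟶ X) :
    cokernel (f ≫ cokernel.π (u ≫ f)) ≅ cokernel f where
  hom := cokernel.desc _ (cokernel.desc _ (cokernel.π f)
      (by rw [Category.assoc, cokernel.condition, comp_zero]))
    (by rw [Category.assoc, cokernel.π_desc, cokernel.condition])
  inv := cokernel.desc _ (cokernel.π (u ≫ f) ≫ cokernel.π (f ≫ cokernel.π (u ≫ f)))
      (by rw [← Category.assoc, cokernel.condition])
  hom_inv_id := by
    ext
    simp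
  inv_hom_id := by
    ext
    simp

theorem statement16 [∀ X : A, IsNoetherianObject X] [∀ X : A, IsArtinianObject X] (E : Set A) (hE : IsLeftSchur E)
    {L M N : A} (i : L ⟶ M) (p : M ⟶ N) (w : i ≫ p = 0)
    (hS : (ShortComplex.mk i p w).ShortExact)
    (hL : L ∈ E) (hM : M ∈ E) (hN : N ∈ E) :
    M ∈ Wmap E ↔ (L ∈ Wmap E ∧ N ∈ Wmap E) := by
  obtain ⟨hIso, hExt, _⟩ := hE
  have hMono : Mono i := hS.mono_f
  have hEpi : Epi p := hS.epi_g
  constructor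
  · intro hMW
    constructor
    · -- L ∈ Wmap E : use pushout of i along f
      refine ⟨hL, fun X hX f => ?_⟩
      -- Y := pushout i f; 0 → X → Y → N → 0 is exact so Y ∈ E
      have hMonoInr : Mono (pushout.inr i f) := inferInstance
      -- cokernel (pushout.inr i f) ≅ cokernel i ≅ N
      have e1 : cokernel (pushout.inr i f) ≅ cokernel i :=
        cokernel.mapIso (pushout.inr i f) (pushout.inl f i) (Iso.refl _)
          (pushoutSymmetry i f) (by simp) ≪≫ cokernelPushoutInlIso f i
      have e2 : cokernel i ≅ N :=
        IsColimit.coconePointUniqueUpToIso (cokernelIsCokernel i) hS.gIsCokernel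
      have hcokInr : cokernel (pushout.inr i f) ∈ E :=
        hIso (e1 ≪≫ e2).symm hN
      have hY : pushout i f ∈ E := by
        refine hExt.2 (ShortComplex.mk (pushout.inr i f) (cokernel.π _)
          (cokernel.condition _)) ?_ hX hcokInr
        exact { exact := ShortComplex.exact_cokernel _ }
      -- cokernel f ≅ cokernel (pushout.inl i f) ∈ E
      exact hIso (cokernelPushoutInlIso i f) (hMW.2 hY (pushout.inl i f))
    · -- N ∈ Wmap E
      refine ⟨hN, fun X hX g => ?_⟩
      exact hIso (cokernelEpiComp p g) (hMW.2 hX (p ≫ g))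
  · rintro ⟨hLW, hNW⟩
    refine ⟨hM, fun X hX f => ?_⟩
    -- C := cokernel (i ≫ f) ∈ E since L ∈ Wmap E
    have hC : cokernel (i ≫ f) ∈ E := hLW.2 hX (i ≫ f)
    -- factor f ≫ π through p
    have hfz : i ≫ f ≫ cokernel.π (i ≫ f) = 0 := by
      rw [← Category.assoc, cokernel.condition]
    let g : N ⟶ cokernel (i ≫ f) := hS.exact.desc (f ≫ cokernel.π (i ≫ f)) hfz
    have hg : p ≫ g = f ≫ cokernel.π (i ≫ f) := hS.exact.g_desc _ hfz
    have hcokg : cokernel g ∈ E := hNW.2 hC g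
    -- cokernel f ≅ cokernel (f ≫ π) ≅ cokernel (p ≫ g) ≅ cokernel g
    have e : cokernel f ≅ cokernel g :=
      (cokernelCompCokernelπIso i f).symm ≪≫
        eqToIso (congrArg (fun h : M ⟶ cokernel (i ≫ f) => cokernel h) hg.symm) ≪≫ cokernelEpiComp p g
    exact hIso e.symm hcokg

end MonobrickPaper
end

section
/- Let M be a monobrick in a length abelian category and N a cofinal extension of M. Then the maximal elements of M (in the submodule order) coincide with the maximal elements of N. In particular max of the cofinal closure of M equals max(M), and for every semibrick S, max of the cofinal closure of S is S itself. -/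
open CategoryTheory CategoryTheory.Limits

namespace MonobrickPaper

universe v u

variable {A : Type u} [Category.{v} A] [Abelian A]

lemma subOrder_refl (X : A) : subOrder X X := ⟨𝟙 X, inferInstance⟩

lemma subOrder_trans {X Y Z : A} (h1 : subOrder X Y) (h2 : subOrder Y Z) : subOrder X Z := by
  obtain ⟨f, hf⟩ := h1; obtain ⟨g, hg⟩ := h2
  exact ⟨f ≫ g, mono_comp f g⟩

/-- In a monobrick, mutually embedding objects are isomorphic. -/
lemma mutual_mono_iso {N : Set A} (hN : IsMonobrick N) {X Y : A} (hX : X ∈ N) (hY : Y ∈ N)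
    (hxy : subOrder X Y) (hyx : subOrder Y X) : Nonempty (X ≅ Y) := by
  obtain ⟨f, hf⟩ := hxy; obtain ⟨g, hg⟩ := hyx
  haveI := hf; haveI := hg
  have hXb := hN.2.1 X hX
  have hYb := hN.2.1 Y hY
  have h2 : IsIso (g ≫ f) := by
    rcases hYb.2 (g ≫ f) with h | h
    · exfalso
      apply hYb.1
      refine IsZero.of_mono_eq_zero g ?_
      rw [← cancel_mono f, h, zero_comp]
    · exact h
  haveI := h2
  haveI : Epi (g ≫ f) := inferInstance
  haveI : Epi f := epi_of_epi g f
  haveI := isIso_of_mono_of_epi f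
  exact ⟨asIso f⟩

lemma cofinalExt_self {M : Set A} (hM : IsMonobrick M) : IsCofinalExt M M :=
  ⟨hM, le_refl M, fun X hX => ⟨X, hX, subOrder_refl X⟩⟩

lemma maxSet_eq_of_cofinalExt {M N : Set A} (hM : IsMonobrick M) (hN : IsCofinalExt M N) :
    maxSet M = maxSet N := by
  obtain ⟨hNmb, hMN, hcof⟩ := hN
  ext X
  constructor
  · rintro ⟨hXM, hmax⟩
    refine ⟨hMN hXM, fun Z hZ hXZ => ?_⟩
    obtain ⟨Y, hYM, hZY⟩ := hcof Z hZ
    have hYX := hmax Y hYM (subOrder_trans hXZ hZY)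
    exact subOrder_trans hZY hYX
  · rintro ⟨hXN, hmax⟩
    obtain ⟨Y, hYM, hXY⟩ := hcof X hXN
    have hYX := hmax Y (hMN hYM) hXY
    obtain ⟨e⟩ := mutual_mono_iso hNmb hXN (hMN hYM) hXY hYX
    have hXM : X ∈ M := hM.1 e.symm hYM
    exact ⟨hXM, fun Z hZ hXZ => hmax Z (hMN hZ) hXZ⟩

lemma maxSet_cofClosure {M : Set A} (hM : IsMonobrick M) :
    maxSet (cofClosure M) = maxSet M := by
  have hMsub : M ⊆ cofClosure M := fun X hX => ⟨M, cofinalExt_self hM, hX⟩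
  ext X
  constructor
  · rintro ⟨⟨N', hN', hXN'⟩, hmax⟩
    obtain ⟨hN'mb, hMN', hcof⟩ := hN'
    obtain ⟨Y, hYM, hXY⟩ := hcof X hXN'
    have hYX := hmax Y (hMsub hYM) hXY
    obtain ⟨e⟩ := mutual_mono_iso hN'mb hXN' (hMN' hYM) hXY hYX
    have hXM : X ∈ M := hM.1 e.symm hYM
    exact ⟨hXM, fun Z hZ hXZ => hmax Z (hMsub hZ) hXZ⟩
  · rintro ⟨hXM, hmax⟩
    refine ⟨hMsub hXM, ?_⟩
    rintro Z ⟨N', hN', hZN'⟩ hXZ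
    obtain ⟨hN'mb, hMN', hcof⟩ := hN'
    obtain ⟨Y, hYM, hZY⟩ := hcof Z hZN'
    have hYX := hmax Y hYM (subOrder_trans hXZ hZY)
    exact subOrder_trans hZY hYX

lemma semibrick_isMonobrick {S : Set A} (hS : IsSemibrick S) : IsMonobrick S := by
  refine ⟨hS.1, hS.2.1, fun X hX Y hY f => ?_⟩
  rcases hS.2.2 hX hY f with h | h
  · exact Or.inl h
  · exact Or.inr (by infer_instance)

lemma maxSet_semibrick {S : Set A} (hS : IsSemibrick S) : maxSet S = S := by
  ext X
  constructor
  · exact fun h => h.1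
  · intro hX
    refine ⟨hX, fun Y hY hXY => ?_⟩
    obtain ⟨f, hf⟩ := hXY
    rcases hS.2.2 hX hY f with h | h
    · exact absurd (IsZero.of_mono_eq_zero f h) (hS.2.1 X hX).1
    · exact ⟨inv f, inferInstance⟩

theorem statement18 [∀ X : A, IsNoetherianObject X] [∀ X : A, IsArtinianObject X] (M N : Set A)
    (hM : IsMonobrick M) (hN : IsCofinalExt M N) :
    maxSet M = maxSet N ∧ maxSet (cofClosure M) = maxSet M ∧
    ∀ S : Set A, IsSemibrick S → maxSet (cofClosure S) = S := by
  refine ⟨maxSet_eq_of_cofinalExt hM hN, maxSet_cofClosure hM, fun S hS => ?_⟩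
  rw [maxSet_cofClosure (semibrick_isMonobrick hS), maxSet_semibrick hS]

end MonobrickPaper
end

section
/- Let P be a poset such that for every m ∈ P, every chain contained in the down-set {x ∈ P : x ≤ m} is finite. Then P is finite if and only if (1) every element of P is below some maximal element, and (2) every antichain of P is finite. -/
/-- A set in which every chain is finite and every antichain is finite is finite. -/
lemma aux_finite_of_chains_antichains {P : Type*} [PartialOrder P] (s : Set P)
    (hc : ∀ t : Set P, t ⊆ s → IsChain (· ≤ ·) t → t.Finite)
    (ha : ∀ t : Set P, IsAntichain (· ≤ ·) t → t.Finite) : s.Finite := by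
  by_contra hs
  rw [← Set.not_infinite, not_not] at hs
  set f : ℕ → P := fun n => (hs.natEmbedding s n : P) with hf
  have hfs : ∀ n, f n ∈ s := fun n => (hs.natEmbedding s n).2
  have hfinj : Function.Injective f := fun m n hmn =>
    (hs.natEmbedding s).injective (Subtype.val_injective hmn)
  obtain ⟨g, hg | hg⟩ := exists_increasing_or_nonincreasing_subseq (· ≤ · : P → P → Prop) f
  · -- monotone subsequence : infinite chain
    have hchain : IsChain (· ≤ ·) (Set.range (f ∘ g)) := by
      rintro _ ⟨m, rfl⟩ _ ⟨n, rfl⟩ hne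
      rcases lt_trichotomy m n with h | h | h
      · exact Or.inl (hg _ _ h)
      · exact absurd (congrArg _ h) hne
      · exact Or.inr (hg _ _ h)
    have := hc _ (Set.range_subset_iff.2 fun n => hfs _) hchain
    exact (Set.infinite_range_of_injective (hfinj.comp g.injective)) this
  · -- no m < n with f (g m) ≤ f (g n); refine further
    obtain ⟨g', hg' | hg'⟩ := exists_increasing_or_nonincreasing_subseq (· ≥ · : P → P → Prop) (f ∘ g)
    · -- decreasing subsequence : infinite chain
      have hchain : IsChain (· ≤ ·) (Set.range (f ∘ g ∘ g')) := by
        rintro _ ⟨m, rfl⟩ _ ⟨n, rfl⟩ hne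
        rcases lt_trichotomy m n with h | h | h
        · exact Or.inr (hg' _ _ h)
        · exact absurd (congrArg _ h) hne
        · exact Or.inl (hg' _ _ h)
      have := hc _ (Set.range_subset_iff.2 fun n => hfs _) hchain
      exact (Set.infinite_range_of_injective
        (hfinj.comp (g.injective.comp g'.injective))) this
    · -- infinite antichain
      have hanti : IsAntichain (· ≤ ·) (Set.range (f ∘ g ∘ g')) := by
        rintro _ ⟨m, rfl⟩ _ ⟨n, rfl⟩ hne
        rcases lt_trichotomy m n with h | h | h
        · exact hg (g' m) (g' n) (g'.strictMono h)
        · exact absurd (congrArg _ h) hne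
        · intro hle
          exact hg' _ _ h hle
      have := ha _ hanti
      exact (Set.infinite_range_of_injective
        (hfinj.comp (g.injective.comp g'.injective))) this

theorem statement19 {P : Type*} [PartialOrder P]
    (h : ∀ m : P, ∀ S : Set P, S ⊆ {x : P | x ≤ m} → IsChain (· ≤ ·) S → S.Finite) :
    Finite P ↔
      ((∀ x : P, ∃ m : P, x ≤ m ∧ IsMax m) ∧
       (∀ S : Set P, IsAntichain (· ≤ ·) S → S.Finite)) := by
  constructor
  · intro hP
    refine ⟨fun x => ?_, fun S _ => S.toFinite⟩
    have hwf : WellFoundedGT P := Finite.to_wellFoundedGT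
    obtain ⟨m, hm, hmin⟩ := hwf.wf.has_min {y | x ≤ y} ⟨x, le_rfl⟩
    exact ⟨m, hm, fun z hz => by
      by_contra hne
      exact hmin z (hm.trans hz) (lt_of_le_of_ne hz fun e => hne (e.ge))⟩
  · rintro ⟨h1, h2⟩
    have hM : Set.Finite {m : P | IsMax m} := by
      refine h2 _ fun a ha b hb hne hab => hne ?_
      exact le_antisymm hab (ha hab)
    have huniv : (Set.univ : Set P) ⊆ ⋃ m ∈ {m : P | IsMax m}, {x : P | x ≤ m} := by
      intro x _
      obtain ⟨m, hxm, hm⟩ := h1 x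
      exact Set.mem_biUnion hm hxm
    have hfin : (⋃ m ∈ {m : P | IsMax m}, {x : P | x ≤ m}).Finite := by
      refine hM.biUnion fun m _ => ?_
      exact aux_finite_of_chains_antichains _ (fun t hts htc => h m t hts htc) h2
    exact Set.finite_univ_iff.mp (hfin.subset huniv)
end
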